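/- Let h > 0, n > 0, κ_m > 0, |κ_cm| < κ_m, and T_c > T_m. Then the polynomial temperature profile T(z) = T_m + (T_c − T_m)η(z), with η as defined, is strictly increasing on [−h/2, h/2]; in particular T_m ≤ T(z) ≤ T_c for all z ∈ [−h/2, h/2]. -/

import Mathlib

/-!
With `a = κ_cm/κ_m < 1`, the numerator `g(u) = C η` is the truncation of `∑ₖ (-a)ᵏ u^(kn+1)/(kn+1)`,
whose derivative `∑ₖ (-a uⁿ)ᵏ` is a geometric sum with ratio `-a uⁿ > -1`, hence positive on
`(0, 1)`. So `g` is strictly increasing on `[0, 1]` with `g 0 = 0`, which makes `C = g 1` positive;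
`T` is then `g` composed with the increasing affine map `z ↦ u`, scaled by `(T_c - T_m)/C > 0`,
and takes the values `T_m`, `T_c` at the two faces.
-/

open Finset Set

/-- Truncation after `N` terms of the series of `∫₀ᵘ dv / (1 + a vⁿ)`. -/
noncomputable def truncProfile (a n : ℝ) (N : ℕ) (u : ℝ) : ℝ :=
  ∑ k ∈ range N, (-a) ^ k / (k * n + 1) * u ^ ((k : ℝ) * n + 1)

section

variable {a n : ℝ} {N : ℕ}

lemma continuous_truncProfile (hn : 0 ≤ n) : Continuous (truncProfile a n N) := by
  unfold truncProfile
  fun_prop (disch := positivity)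

lemma truncProfile_zero (hn : 0 ≤ n) : truncProfile a n N 0 = 0 :=
  sum_eq_zero fun k _ => by rw [Real.zero_rpow (by positivity), mul_zero]

lemma hasDerivAt_truncProfile (hn : 0 ≤ n) {u : ℝ} (hu : 0 < u) :
    HasDerivAt (truncProfile a n N) (∑ k ∈ range N, (-a * u ^ n) ^ k) u := by
  unfold truncProfile
  refine HasDerivAt.fun_sum fun k _ => ?_
  have hk : (k : ℝ) * n + 1 ≠ 0 := by positivity
  refine ((Real.hasDerivAt_rpow_const (p := (k : ℝ) * n + 1) (Or.inl hu.ne')).const_mul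
    ((-a) ^ k / (k * n + 1))).congr_deriv ?_
  rw [add_sub_cancel_right, mul_comm (k : ℝ), Real.rpow_mul hu.le, Real.rpow_natCast]
  field_simp
  ring

lemma strictMonoOn_truncProfile (hn : 0 ≤ n) (ha : a < 1) (hN : N ≠ 0) :
    StrictMonoOn (truncProfile a n N) (Icc 0 1) := by
  refine strictMonoOn_of_deriv_pos (convex_Icc 0 1) (continuous_truncProfile hn).continuousOn ?_
  intro u hu
  rw [interior_Icc] at hu
  rw [(hasDerivAt_truncProfile hn hu.1).deriv]
  refine geom_sum_pos' ?_ hN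
  have hun : u ^ n ≤ 1 := Real.rpow_le_one hu.1.le hu.2.le hn
  have hun_pos : 0 < u ^ n := Real.rpow_pos_of_pos hu.1 n
  nlinarith

end

lemma truncProfile_div_six (b c n u : ℝ) : truncProfile (b / c) n 6 u = u
    - b / ((n + 1) * c) * u ^ (n + 1) + b ^ 2 / ((2 * n + 1) * c ^ 2) * u ^ (2 * n + 1)
    - b ^ 3 / ((3 * n + 1) * c ^ 3) * u ^ (3 * n + 1)
    + b ^ 4 / ((4 * n + 1) * c ^ 4) * u ^ (4 * n + 1)
    - b ^ 5 / ((5 * n + 1) * c ^ 5) * u ^ (5 * n + 1) := by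
  simp only [truncProfile, sum_range_succ, range_one, sum_singleton, Nat.cast_zero,
    Nat.cast_one, Nat.cast_ofNat, zero_mul, zero_add, one_mul, Real.rpow_one]
  simp only [div_eq_mul_inv, mul_inv]
  ring

noncomputable def temperatureProfile (g : ℝ → ℝ) (h Tm Tc z : ℝ) : ℝ :=
  Tm + (Tc - Tm) * (g ((2 * z + h) / (2 * h)) / g 1)

section

variable {g : ℝ → ℝ} {h Tm Tc : ℝ}

lemma apply_one_pos (hg : StrictMonoOn g (Icc 0 1)) (hg0 : g 0 = 0) : 0 < g 1 :=
  hg0 ▸ hg (left_mem_Icc.2 zero_le_one) (right_mem_Icc.2 zero_le_one) one_pos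

lemma strictMonoOn_temperatureProfile (hh : 0 < h) (hT : Tm < Tc)
    (hg : StrictMonoOn g (Icc 0 1)) (hg0 : g 0 = 0) :
    StrictMonoOn (temperatureProfile g h Tm Tc) (Icc (-h / 2) (h / 2)) := by
  have hg1 : 0 < g 1 := apply_one_pos hg hg0
  have hu : StrictMono fun z => (2 * z + h) / (2 * h) := fun x y hxy => by dsimp only; gcongr
  have hmaps : MapsTo (fun z => (2 * z + h) / (2 * h)) (Icc (-h / 2) (h / 2)) (Icc 0 1) :=
    fun z hz => ⟨div_nonneg (by linarith [hz.1]) (by positivity),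
      (div_le_one (by positivity)).2 (by linarith [hz.2])⟩
  intro x hx y hy hxy
  have hTm : 0 < Tc - Tm := sub_pos.2 hT
  unfold temperatureProfile
  gcongr
  exact hg (hmaps hx) (hmaps hy) (hu hxy)

lemma temperatureProfile_mem_Icc (hh : 0 < h) (hT : Tm < Tc)
    (hg : StrictMonoOn g (Icc 0 1)) (hg0 : g 0 = 0) {z : ℝ} (hz : z ∈ Icc (-h / 2) (h / 2)) :
    temperatureProfile g h Tm Tc z ∈ Icc Tm Tc := by
  have hg1 : g 1 ≠ 0 := (apply_one_pos hg hg0).ne'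
  have hends := (strictMonoOn_temperatureProfile hh hT hg hg0).monotoneOn.mapsTo_Icc hz
  have hleft : temperatureProfile g h Tm Tc (-h / 2) = Tm := by
    rw [temperatureProfile, show (2 * (-h / 2) + h) / (2 * h) = 0 by ring, hg0, zero_div,
      mul_zero, add_zero]
  have hright : temperatureProfile g h Tm Tc (h / 2) = Tc := by
    rw [temperatureProfile, show (2 * (h / 2) + h) / (2 * h) = 1 by field_simp; ring,
      div_self hg1]
    ring
  rwa [hleft, hright] at hends

end

/-- The truncated polynomial temperature profile `T(z) = T_m + (T_c - T_m) η(z)` is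
strictly increasing through the thickness when `T_c > T_m`; in particular
`T_m ≤ T(z) ≤ T_c` on `[-h/2, h/2]`. -/
theorem stmt_6 (h n κm κcm C Tm Tc : ℝ) (hh : 0 < h) (hn : 0 < n)
    (hκm : 0 < κm) (hκcm : |κcm| < κm) (hTcm : Tm < Tc)
    (hC : C = 1 - κcm / ((n+1)*κm) + κcm^2 / ((2*n+1)*κm^2) - κcm^3 / ((3*n+1)*κm^3)
        + κcm^4 / ((4*n+1)*κm^4) - κcm^5 / ((5*n+1)*κm^5))
    (η : ℝ → ℝ)
    (hη : ∀ z, η z = (1/C) * ((2*z+h)/(2*h)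
        - (κcm / ((n+1)*κm)) * ((2*z+h)/(2*h)) ^ (n+1)
        + (κcm^2 / ((2*n+1)*κm^2)) * ((2*z+h)/(2*h)) ^ (2*n+1)
        - (κcm^3 / ((3*n+1)*κm^3)) * ((2*z+h)/(2*h)) ^ (3*n+1)
        + (κcm^4 / ((4*n+1)*κm^4)) * ((2*z+h)/(2*h)) ^ (4*n+1)
        - (κcm^5 / ((5*n+1)*κm^5)) * ((2*z+h)/(2*h)) ^ (5*n+1)))
    (T : ℝ → ℝ) (hT : ∀ z, T z = Tm + (Tc - Tm) * η z) :
    StrictMonoOn T (Set.Icc (-h/2) (h/2)) ∧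
    ∀ z ∈ Set.Icc (-h/2) (h/2), Tm ≤ T z ∧ T z ≤ Tc := by
  set g := truncProfile (κcm / κm) n 6
  have hratio : κcm / κm < 1 := (div_lt_one hκm).2 ((le_abs_self κcm).trans_lt hκcm)
  have hg : StrictMonoOn g (Icc 0 1) := strictMonoOn_truncProfile hn.le hratio (by norm_num)
  have hg0 : g 0 = 0 := truncProfile_zero hn.le
  have hCg : C = g 1 := by simp only [hC, g, truncProfile_div_six, Real.one_rpow, mul_one]
  have hTg : T = temperatureProfile g h Tm Tc := by
    funext z
    rw [hT, hη, temperatureProfile, hCg]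
    simp only [g, truncProfile_div_six]
    ring
  rw [hTg]
  exact ⟨strictMonoOn_temperatureProfile hh hTcm hg hg0,
    fun z hz => temperatureProfile_mem_Icc hh hTcm hg hg0 hz⟩
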